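/- Let P be a poset on [n], 𝔽_q a finite field, and H a subgroup of the automorphism group Aut(P). Then the equivalence relation E_H on I(P), defined by (I,J) ∈ E_H iff σ(I) = J for some σ ∈ H, is a MacWilliams-type equivalence relation: for all linear P-codes C₁, C₂ ⊆ 𝔽_q^n, if A_{Ī,E_H}(C₁) = A_{Ī,E_H}(C₂) for all order ideals I, then A_{J̄^c,E_H*}(C₁^⊥) = A_{J̄^c,E_H*}(C₂^⊥) for all order ideals J. (Theorem 4.1(i).) -/

import Mathlib

open scoped BigOperators
open Finset

noncomputable section
open scoped Classical

/-- `I ⊆ [n]` is an order ideal with respect to the order relation `le`. -/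
def IsIdeal {n : ℕ} (le : Fin n → Fin n → Prop) (I : Finset (Fin n)) : Prop :=
  ∀ a ∈ I, ∀ b, le b a → b ∈ I

/-- `⟨X⟩_P` : the smallest order ideal (w.r.t. `le`) containing `X`. -/
def idealCl {n : ℕ} (le : Fin n → Fin n → Prop) (X : Finset (Fin n)) : Finset (Fin n) :=
  Finset.univ.filter fun b => ∃ a ∈ X, le b a

/-- `M(A)` : the set of maximal elements of `A` with respect to `le`. -/
def maxSet {n : ℕ} (le : Fin n → Fin n → Prop) (A : Finset (Fin n)) : Finset (Fin n) :=
  A.filter fun a => ∀ b ∈ A, le a b → b = a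

/-- `E` is an equivalence relation on the set of order ideals of the poset `le`. -/
def EqvOnIdeals {n : ℕ} (le : Fin n → Fin n → Prop)
    (E : Finset (Fin n) → Finset (Fin n) → Prop) : Prop :=
  (∀ I J, E I J → IsIdeal le I ∧ IsIdeal le J) ∧
  (∀ I, IsIdeal le I → E I I) ∧
  (∀ I J, E I J → E J I) ∧
  (∀ I J K, E I J → E J K → E I K)

/-- support of a vector -/
def supp {n : ℕ} {F : Type} [Field F] [Fintype F] (v : Fin n → F) : Finset (Fin n) :=
  Finset.univ.filter fun i => v i ≠ 0

/-- standard dot product -/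
def dot {n : ℕ} {F : Type} [Field F] [Fintype F] (u v : Fin n → F) : F := ∑ i, u i * v i

/-- the sphere `S_I = {v : ⟨supp v⟩_P = I}` -/
def sph {n : ℕ} (F : Type) [Field F] [Fintype F] (le : Fin n → Fin n → Prop)
    (I : Finset (Fin n)) : Finset (Fin n → F) :=
  Finset.univ.filter fun v => idealCl le (supp v) = I

/-- the dual sphere `S_{J^c} = {v : ⟨supp v⟩_{P*} = J^c}` -/
def sphD {n : ℕ} (F : Type) [Field F] [Fintype F] (le : Fin n → Fin n → Prop)
    (J : Finset (Fin n)) : Finset (Fin n → F) :=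
  Finset.univ.filter fun v => idealCl (fun a b => le b a) (supp v) = Jᶜ

/-- the `E`-sphere `S_{Ī,E} = {v : (⟨supp v⟩_P, I) ∈ E}` -/
def sphE {n : ℕ} (F : Type) [Field F] [Fintype F] (le : Fin n → Fin n → Prop)
    (E : Finset (Fin n) → Finset (Fin n) → Prop) (I : Finset (Fin n)) :
    Finset (Fin n → F) :=
  Finset.univ.filter fun v => E (idealCl le (supp v)) I

/-- the `E*`-sphere `S_{J̄^c,E*} = {v : ⟨supp v⟩_{P*} = K^c for some ideal K with (K,J) ∈ E}` -/
def sphED {n : ℕ} (F : Type) [Field F] [Fintype F] (le : Fin n → Fin n → Prop)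
    (E : Finset (Fin n) → Finset (Fin n) → Prop) (J : Finset (Fin n)) :
    Finset (Fin n → F) :=
  Finset.univ.filter fun v =>
    ∃ K, IsIdeal le K ∧ E K J ∧ idealCl (fun a b => le b a) (supp v) = Kᶜ

/-- the dual code `C^⊥` -/
def dualCode {n : ℕ} {F : Type} [Field F] [Fintype F] (C : Submodule F (Fin n → F)) :
    Submodule F (Fin n → F) where
  carrier := {u | ∀ v ∈ C, dot u v = 0}
  zero_mem' := by intro v hv; simp [dot]
  add_mem' := by
    intro a b ha hb v hv
    have h1 := ha v hv
    have h2 := hb v hv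
    simp only [dot, Pi.add_apply] at *
    simp [add_mul, Finset.sum_add_distrib, h1, h2]
  smul_mem' := by
    intro c a ha v hv
    have h1 := ha v hv
    simp only [dot, Pi.smul_apply, smul_eq_mul] at *
    simp [mul_assoc, ← Finset.mul_sum, h1]

/-- `A_{Ī,E}(C) = |C ∩ S_{Ī,E}|` -/
def AE {n : ℕ} {F : Type} [Field F] [Fintype F] (le : Fin n → Fin n → Prop)
    (E : Finset (Fin n) → Finset (Fin n) → Prop)
    (C : Submodule F (Fin n → F)) (I : Finset (Fin n)) : ℕ :=
  ((sphE F le E I).filter fun v => v ∈ C).card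

/-- `A_{J̄^c,E*}(D) = |D ∩ S_{J̄^c,E*}|` -/
def AED {n : ℕ} {F : Type} [Field F] [Fintype F] (le : Fin n → Fin n → Prop)
    (E : Finset (Fin n) → Finset (Fin n) → Prop)
    (D : Submodule F (Fin n → F)) (J : Finset (Fin n)) : ℕ :=
  ((sphED F le E J).filter fun v => v ∈ D).card

/-- `E` is a MacWilliams-type equivalence relation (w.r.t. the field `F`). -/
def IsMacWilliamsType {n : ℕ} (F : Type) [Field F] [Fintype F]
    (le : Fin n → Fin n → Prop) (E : Finset (Fin n) → Finset (Fin n) → Prop) : Prop :=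
  ∀ C₁ C₂ : Submodule F (Fin n → F),
    (∀ I, IsIdeal le I → AE le E C₁ I = AE le E C₂ I) →
    ∀ J, IsIdeal le J → AED le E (dualCode C₁) J = AED le E (dualCode C₂) J

/-- a hierarchical poset (ordinal sum of antichains) -/
def IsHierarchical {n : ℕ} (le : Fin n → Fin n → Prop) : Prop :=
  ∃ l : Fin n → ℕ, ∀ i j, (le i j ∧ i ≠ j) ↔ l i < l j

/-- `σ` is an automorphism of the poset `le`. -/
def IsAut {n : ℕ} (le : Fin n → Fin n → Prop) (σ : Equiv.Perm (Fin n)) : Prop :=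
  ∀ x y, le x y ↔ le (σ x) (σ y)

/-- `A` and `B` are order-isomorphic with the induced orders. -/
def OrdIso {n : ℕ} (le : Fin n → Fin n → Prop) (A B : Finset (Fin n)) : Prop :=
  ∃ e : {x // x ∈ A} ≃ {x // x ∈ B}, ∀ a b : {x // x ∈ A}, le ↑a ↑b ↔ le ↑(e a) ↑(e b)


/-!
For an ideal `K`, the identity `C^⊥ ∩ 𝔽^{Kᶜ} = (C + 𝔽^K)^⊥` and a dimension count give
`|C^⊥ ∩ 𝔽^{Kᶜ}| · |C| = q^{|Kᶜ|} · |C ∩ 𝔽^K|`. Summed over the `H`-orbit of an ideal `J`,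
the right side becomes a sum over `v ∈ C` of `#{K ∈ H·J | ⟨supp v⟩ ⊆ K}`, a function of the
`E_H`-class of `⟨supp v⟩`, hence determined by the numbers `A_{Ī,E_H}(C)` (which also fix `|C|`).
The left side is a sum over `v ∈ C^⊥` of `#{K ∈ H·J | K ⊆ K_v}`, where `⟨supp v⟩_{P*} = K_vᶜ`.
This weight is `1` when `K_v ∈ H·J`, and otherwise nonzero only if `|K_v| > |J|`, so downward
induction on `|J|` recovers the numbers `A_{J̄^c,E_H*}(C^⊥)`.
-/

open Module MulAction
open scoped Pointwise

section Supported

variable {n : ℕ} (F : Type) [Field F]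

def supported (T : Finset (Fin n)) : Submodule F (Fin n → F) :=
  ⨅ i ∈ ((Tᶜ : Finset (Fin n)) : Set (Fin n)), LinearMap.ker (LinearMap.proj i)

variable {F}

lemma finrank_supported (T : Finset (Fin n)) : finrank F (supported F T) = #T :=
  (LinearMap.iInfKerProjEquiv F (fun _ => F) (I := (T : Set (Fin n))) (J := ↑Tᶜ)
    (by simpa using disjoint_compl_right) (by simp)).finrank_eq.trans (by simp)

variable [Fintype F]

lemma mem_supp {v : Fin n → F} {i : Fin n} : i ∈ supp v ↔ v i ≠ 0 := by
  simp [supp]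

lemma mem_supported {T : Finset (Fin n)} {v : Fin n → F} : v ∈ supported F T ↔ supp v ⊆ T := by
  simp [supported, supp, Finset.subset_iff, not_imp_comm]

lemma mem_dualCode {C : Submodule F (Fin n → F)} {u : Fin n → F} :
    u ∈ dualCode C ↔ ∀ v ∈ C, dot u v = 0 := Iff.rfl

lemma dualCode_eq_comap_dualAnnihilator (C : Submodule F (Fin n → F)) :
    dualCode C = C.dualAnnihilator.comap (dotProductEquiv F (Fin n)).toLinearMap := by
  ext u
  simp [mem_dualCode, dot, dotProduct]

lemma finrank_dualCode_add_finrank (C : Submodule F (Fin n → F)) :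
    finrank F (dualCode C) + finrank F C = n := by
  rw [dualCode_eq_comap_dualAnnihilator, Submodule.comap_equiv_eq_map_symm,
    LinearEquiv.finrank_map_eq, add_comm, Subspace.finrank_add_finrank_dualAnnihilator_eq]
  simp

lemma dualCode_sup (C C' : Submodule F (Fin n → F)) :
    dualCode (C ⊔ C') = dualCode C ⊓ dualCode C' := by
  simp only [dualCode_eq_comap_dualAnnihilator, Submodule.dualAnnihilator_sup_eq,
    Submodule.comap_inf]

lemma dualCode_supported (T : Finset (Fin n)) : dualCode (supported F T) = supported F Tᶜ := by
  ext u
  simp only [mem_dualCode, mem_supported]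
  constructor
  · intro h i hi
    rw [mem_compl]
    intro hiT
    have hsingle : supp (Pi.single i 1 : Fin n → F) ⊆ T := fun j hj => by
      rcases eq_or_ne j i with rfl | hji
      · exact hiT
      · simp [mem_supp, hji] at hj
    have hui := h _ hsingle
    simp only [dot, Pi.single_apply, mul_ite, mul_one, mul_zero, sum_ite_eq', mem_univ,
      if_true] at hui
    exact mem_supp.mp hi hui
  · intro h v hv
    refine sum_eq_zero fun i _ => ?_
    by_contra hne
    obtain ⟨hu, hv'⟩ := mul_ne_zero_iff.mp hne
    exact mem_compl.mp (h (mem_supp.mpr hu)) (hv (mem_supp.mpr hv'))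

lemma finrank_dualCode_inf_supported_compl_add (C : Submodule F (Fin n → F))
    (T : Finset (Fin n)) :
    finrank F ↥(dualCode C ⊓ supported F Tᶜ) + finrank F C
      = #Tᶜ + finrank F ↥(C ⊓ supported F T) := by
  have hdual := finrank_dualCode_add_finrank (C ⊔ supported F T)
  have hsup := Submodule.finrank_sup_add_finrank_inf_eq C (supported F T)
  have hcompl := card_add_card_compl T
  rw [dualCode_sup, dualCode_supported] at hdual
  rw [finrank_supported] at hsup
  rw [Fintype.card_fin] at hcompl
  omega

lemma card_filter_mem (W : Submodule F (Fin n → F)) :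
    #{v | v ∈ W} = Fintype.card F ^ finrank F W := by
  rw [← Module.card_eq_pow_finrank (K := F) (V := W), Fintype.card_subtype]

lemma card_dualCode_supp_subset_compl_mul (C : Submodule F (Fin n → F)) (T : Finset (Fin n)) :
    #{v | v ∈ dualCode C ∧ supp v ⊆ Tᶜ} * #{v | v ∈ C}
      = Fintype.card F ^ #Tᶜ * #{v | v ∈ C ∧ supp v ⊆ T} := by
  simp only [← mem_supported, ← Submodule.mem_inf, card_filter_mem, ← pow_add]
  rw [finrank_dualCode_inf_supported_compl_add]

end Supported

section ClassSums

variable {α β : Type*} [Fintype α]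

lemma sum_comp_eq_of_forall_card_filter_rel_eq (r : Setoid α) {φ : α → ℕ}
    (hφ : ∀ a b, r a b → φ a = φ b) (π : β → α) {s₁ s₂ : Finset β}
    (h : ∀ a, φ a ≠ 0 → #{x ∈ s₁ | r (π x) a} = #{x ∈ s₂ | r (π x) a}) :
    ∑ x ∈ s₁, φ (π x) = ∑ x ∈ s₂, φ (π x) := by
  have hfib : ∀ s : Finset β,
      ∑ x ∈ s, φ (π x) = ∑ ω : Quotient r, #{x ∈ s | r (π x) ω.out} * φ ω.out := by
    intro s
    rw [← sum_fiberwise s (fun x => Quotient.mk r (π x))]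
    refine sum_congr rfl fun ω _ => ?_
    simp_rw [Quotient.mk_eq_iff_out]
    rw [sum_congr rfl fun x hx => hφ _ _ (mem_filter.mp hx).2, sum_const, smul_eq_mul]
  rw [hfib, hfib]
  refine sum_congr rfl fun ω _ => ?_
  by_cases hω : φ ω.out = 0
  · simp [hω]
  · rw [h _ hω]

lemma card_filter_subset_eq_ite_add [Fintype β] [DecidableEq β] (p : Finset β → Prop)
    [DecidablePred p] (L : Finset β) :
    #{K | p K ∧ K ⊆ L} = (if p L then 1 else 0) + #{K | p K ∧ K ⊂ L} := by
  have hsplit : ∀ K, (if p K ∧ K ⊆ L then 1 else 0) =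
      (if K = L then (if p K then 1 else 0) else 0) + (if p K ∧ K ⊂ L then 1 else 0) := by
    intro K
    rcases eq_or_ne K L with rfl | hne
    · simp
    · simp [hne, ssubset_iff_subset_ne]
  simp only [card_filter, hsplit, sum_add_distrib, sum_ite_eq', mem_univ, if_true]

end ClassSums

section Orbits

variable {α G : Type*} [Group G] [MulAction G α]

lemma orbitRel_smul_left_iff {g : G} {K J : α} :
    orbitRel G α (g • K) J ↔ orbitRel G α K J :=
  ⟨(orbitRel G α).trans' ((orbitRel G α).symm' (mem_orbit K g)),
    (orbitRel G α).trans' (mem_orbit K g)⟩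

lemma card_filter_orbitRel_congr [Fintype α] {R : α → α → Prop} [DecidableRel R]
    (hR : ∀ (g : G) x y, R (g • x) (g • y) ↔ R x y) (J : α) {L L' : α}
    (h : orbitRel G α L L') :
    #{K | orbitRel G α K J ∧ R K L} = #{K | orbitRel G α K J ∧ R K L'} := by
  obtain ⟨g, rfl⟩ := h
  refine card_nbij' (g⁻¹ • ·) (g • ·) (fun K hK => ?_) (fun K hK => ?_)
    (fun K _ => smul_inv_smul g K) (fun K _ => inv_smul_smul g K)
  · simp only [coe_filter, mem_univ, true_and, Set.mem_ofPred_eq] at hK ⊢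
    rwa [orbitRel_smul_left_iff, ← hR g, smul_inv_smul]
  · simp only [coe_filter, mem_univ, true_and, Set.mem_ofPred_eq] at hK ⊢
    rwa [orbitRel_smul_left_iff, hR g]

end Orbits

section Ideals

variable {n : ℕ} {le : Fin n → Fin n → Prop}

lemma subset_idealCl [Std.Refl le] (X : Finset (Fin n)) : X ⊆ idealCl le X :=
  fun a ha => mem_filter.mpr ⟨mem_univ a, a, ha, refl_of le a⟩

lemma isIdeal_idealCl [IsTrans (Fin n) le] (X : Finset (Fin n)) : IsIdeal le (idealCl le X) := by
  intro a ha b hba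
  obtain ⟨-, c, hc, hac⟩ := mem_filter.mp ha
  exact mem_filter.mpr ⟨mem_univ b, c, hc, _root_.trans_of le hba hac⟩

lemma idealCl_subset_iff [Std.Refl le] {I X : Finset (Fin n)} (hI : IsIdeal le I) :
    idealCl le X ⊆ I ↔ X ⊆ I := by
  refine ⟨(subset_idealCl X).trans, fun hX b hb => ?_⟩
  obtain ⟨-, a, ha, hba⟩ := mem_filter.mp hb
  exact hI a (hX ha) b hba

lemma IsIdeal.compl {D : Finset (Fin n)} (hD : IsIdeal le D) :
    IsIdeal (fun a b => le b a) Dᶜ := by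
  intro a ha b hab
  rw [mem_compl] at ha ⊢
  exact fun hb => ha (hD b hb a hab)

variable {F : Type} [Field F] [Fintype F]

/-- The ideal `K` with `⟨supp v⟩_{P*} = Kᶜ`: the largest ideal disjoint from `supp v`. -/
def dualIdeal (le : Fin n → Fin n → Prop) (v : Fin n → F) : Finset (Fin n) :=
  (idealCl (fun a b => le b a) (supp v))ᶜ

lemma isIdeal_dualIdeal [IsTrans (Fin n) le] (v : Fin n → F) : IsIdeal le (dualIdeal le v) :=
  (isIdeal_idealCl (le := fun a b => le b a) (supp v)).compl

lemma subset_dualIdeal_iff [Std.Refl le] {K : Finset (Fin n)} (hK : IsIdeal le K)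
    {v : Fin n → F} : K ⊆ dualIdeal le v ↔ supp v ⊆ Kᶜ := by
  rw [dualIdeal, ← subset_compl_comm, idealCl_subset_iff hK.compl]

lemma AE_eq_card (E : Finset (Fin n) → Finset (Fin n) → Prop) (C : Submodule F (Fin n → F))
    (I : Finset (Fin n)) : AE le E C I = #{v | v ∈ C ∧ E (idealCl le (supp v)) I} := by
  rw [AE, sphE, filter_filter]
  simp only [and_comm]

lemma AED_eq_card [IsTrans (Fin n) le] (E : Finset (Fin n) → Finset (Fin n) → Prop)
    (D : Submodule F (Fin n → F)) (J : Finset (Fin n)) :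
    AED le E D J = #{v | v ∈ D ∧ E (dualIdeal le v) J} := by
  rw [AED, sphED, filter_filter]
  refine congrArg card (filter_congr fun v _ => ?_)
  constructor
  · rintro ⟨⟨K, -, hKJ, hK⟩, hv⟩
    rw [dualIdeal, hK, compl_compl]
    exact ⟨hv, hKJ⟩
  · rintro ⟨hv, hJ⟩
    exact ⟨⟨_, isIdeal_dualIdeal v, hJ, (compl_compl _).symm⟩, hv⟩

variable {G : Type*} [Group G] [MulAction G (Fin n)]

lemma IsIdeal.smul (hG : ∀ (g : G) x y, le x y ↔ le (g • x) (g • y)) {I : Finset (Fin n)}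
    (hI : IsIdeal le I) (g : G) : IsIdeal le (g • I) := by
  intro a ha b hba
  obtain ⟨a, haI, rfl⟩ := mem_smul_finset.mp ha
  rw [← smul_inv_smul g b] at hba ⊢
  exact smul_mem_smul_finset (hI a haI _ ((hG g _ a).mpr hba))

lemma IsIdeal.of_orbitRel (hG : ∀ (g : G) x y, le x y ↔ le (g • x) (g • y))
    {K J : Finset (Fin n)} (h : orbitRel G (Finset (Fin n)) K J) (hJ : IsIdeal le J) :
    IsIdeal le K := by
  obtain ⟨g, rfl⟩ := h
  exact hJ.smul hG g

lemma card_eq_of_orbitRel {K J : Finset (Fin n)} (h : orbitRel G (Finset (Fin n)) K J) :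
    #K = #J := by
  obtain ⟨g, rfl⟩ := h
  exact card_smul_finset g J

end Ideals

section MacWilliams

variable {n : ℕ} {le : Fin n → Fin n → Prop} {F : Type} [Field F] [Fintype F]
  {G : Type*} [Group G] [MulAction G (Fin n)]

local notation:50 A:51 " ≈ₒ " B:51 => orbitRel G (Finset (Fin n)) A B

lemma card_filter_orbitRel_eq_zero (hG : ∀ (g : G) x y, le x y ↔ le (g • x) (g • y))
    {β : Type*} {π : β → Finset (Fin n)} (hπ : ∀ x, IsIdeal le (π x)) (s : Finset β)
    {J : Finset (Fin n)} (hJ : ¬ IsIdeal le J) :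
    #{x ∈ s | π x ≈ₒ J} = 0 :=
  card_eq_zero.mpr <| filter_eq_empty_iff.mpr fun x _ h =>
    hJ (IsIdeal.of_orbitRel hG ((orbitRel G _).symm' h) (hπ x))

lemma card_filter_orbitRel_eq_of_forall_sum_eq
    (hG : ∀ (g : G) x y, le x y ↔ le (g • x) (g • y))
    {β : Type*} {π : β → Finset (Fin n)} (hπ : ∀ x, IsIdeal le (π x)) {s₁ s₂ : Finset β}
    (h : ∀ J, IsIdeal le J →
      ∑ x ∈ s₁, #{K | K ≈ₒ J ∧ K ⊆ π x} = ∑ x ∈ s₂, #{K | K ≈ₒ J ∧ K ⊆ π x})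
    (J : Finset (Fin n)) :
    #{x ∈ s₁ | π x ≈ₒ J} = #{x ∈ s₂ | π x ≈ₒ J} := by
  induction hk : n - #J using Nat.strong_induction_on generalizing J with
  | _ k IH =>
  by_cases hJ : IsIdeal le J
  swap
  · rw [card_filter_orbitRel_eq_zero hG hπ _ hJ, card_filter_orbitRel_eq_zero hG hπ _ hJ]
  have hsplit : ∀ s : Finset β, ∑ x ∈ s, #{K | K ≈ₒ J ∧ K ⊆ π x}
      = #{x ∈ s | π x ≈ₒ J} + ∑ x ∈ s, #{K | K ≈ₒ J ∧ K ⊂ π x} := by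
    intro s
    rw [sum_congr rfl fun x _ => card_filter_subset_eq_ite_add (· ≈ₒ J) (π x),
      sum_add_distrib, sum_boole, Nat.cast_id]
  have hclass : ∀ L L', L ≈ₒ L' → #{K | K ≈ₒ J ∧ K ⊂ L} = #{K | K ≈ₒ J ∧ K ⊂ L'} :=
    fun L L' => card_filter_orbitRel_congr (R := (· ⊂ ·)) (fun g x y => by
      simp [ssubset_iff_subset_not_subset, smul_finset_subset_smul_finset_iff]) J
  have hstrict : ∑ x ∈ s₁, #{K | K ≈ₒ J ∧ K ⊂ π x} = ∑ x ∈ s₂, #{K | K ≈ₒ J ∧ K ⊂ π x} := by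
    refine sum_comp_eq_of_forall_card_filter_rel_eq (orbitRel G _) hclass π fun L hL => ?_
    obtain ⟨K, hK⟩ := card_ne_zero.mp hL
    obtain ⟨hKJ, hKL⟩ := (mem_filter.mp hK).2
    have hJL : #J < #L := card_eq_of_orbitRel hKJ ▸ card_lt_card hKL
    have hLn : #L ≤ n := by simpa using card_le_univ L
    exact IH (n - #L) (by omega) L rfl
  have hsum := h J hJ
  rw [hsplit, hsplit, hstrict] at hsum
  omega

variable [IsPreorder (Fin n) le]

lemma sum_card_subset_dualIdeal (hG : ∀ (g : G) x y, le x y ↔ le (g • x) (g • y))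
    (D : Submodule F (Fin n → F)) {J : Finset (Fin n)} (hJ : IsIdeal le J) :
    ∑ v with v ∈ D, #{K | K ≈ₒ J ∧ K ⊆ dualIdeal le v}
      = ∑ K with K ≈ₒ J, #{v | v ∈ D ∧ supp v ⊆ Kᶜ} := by
  calc _ = ∑ v with v ∈ D, #{K ∈ {K | K ≈ₒ J} | supp v ⊆ Kᶜ} := by
        refine sum_congr rfl fun v _ => ?_
        rw [filter_filter]
        exact congrArg card (filter_congr fun K _ => and_congr_right fun hKJ =>
          subset_dualIdeal_iff (hJ.of_orbitRel hG hKJ))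
    _ = ∑ K with K ≈ₒ J, #{v ∈ {v | v ∈ D} | supp v ⊆ Kᶜ} :=
        sum_card_bipartiteAbove_eq_sum_card_bipartiteBelow _
    _ = _ := by simp only [filter_filter]

lemma sum_card_idealCl_subset (hG : ∀ (g : G) x y, le x y ↔ le (g • x) (g • y))
    (C : Submodule F (Fin n → F)) {J : Finset (Fin n)} (hJ : IsIdeal le J) :
    ∑ v with v ∈ C, #{K | K ≈ₒ J ∧ idealCl le (supp v) ⊆ K}
      = ∑ K with K ≈ₒ J, #{v | v ∈ C ∧ supp v ⊆ K} := by
  calc _ = ∑ v with v ∈ C, #{K ∈ {K | K ≈ₒ J} | supp v ⊆ K} := by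
        refine sum_congr rfl fun v _ => ?_
        rw [filter_filter]
        exact congrArg card (filter_congr fun K _ => and_congr_right fun hKJ =>
          idealCl_subset_iff (hJ.of_orbitRel hG hKJ))
    _ = ∑ K with K ≈ₒ J, #{v ∈ {v | v ∈ C} | supp v ⊆ K} :=
        sum_card_bipartiteAbove_eq_sum_card_bipartiteBelow _
    _ = _ := by simp only [filter_filter]

lemma sum_card_subset_dualIdeal_mul (hG : ∀ (g : G) x y, le x y ↔ le (g • x) (g • y))
    (C : Submodule F (Fin n → F)) {J : Finset (Fin n)} (hJ : IsIdeal le J) :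
    (∑ v with v ∈ dualCode C, #{K | K ≈ₒ J ∧ K ⊆ dualIdeal le v}) * #{v | v ∈ C}
      = Fintype.card F ^ (n - #J)
        * ∑ v with v ∈ C, #{K | K ≈ₒ J ∧ idealCl le (supp v) ⊆ K} := by
  rw [sum_card_subset_dualIdeal hG _ hJ, sum_card_idealCl_subset hG _ hJ, sum_mul, mul_sum]
  refine sum_congr rfl fun K hK => ?_
  rw [card_dualCode_supp_subset_compl_mul, card_compl, Fintype.card_fin,
    card_eq_of_orbitRel (mem_filter.mp hK).2]

theorem isMacWilliamsType_orbitRel (hG : ∀ (g : G) x y, le x y ↔ le (g • x) (g • y)) :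
    IsMacWilliamsType F le (orbitRel G (Finset (Fin n))) := by
  intro C₁ C₂ hA J hJ
  have hdist : ∀ I, #{v ∈ {v | v ∈ C₁} | idealCl le (supp v) ≈ₒ I}
      = #{v ∈ {v | v ∈ C₂} | idealCl le (supp v) ≈ₒ I} := by
    intro I
    by_cases hI : IsIdeal le I
    · simpa only [AE_eq_card, filter_filter] using hA I hI
    · have hπ (v : Fin n → F) : IsIdeal le (idealCl le (supp v)) := isIdeal_idealCl _
      rw [card_filter_orbitRel_eq_zero hG hπ _ hI, card_filter_orbitRel_eq_zero hG hπ _ hI]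
  have hcard : #{v | v ∈ C₁} = #{v | v ∈ C₂} := by
    simpa using sum_comp_eq_of_forall_card_filter_rel_eq (orbitRel G _) (φ := fun _ => 1)
      (fun _ _ _ => rfl) (fun v => idealCl le (supp v)) fun I _ => hdist I
  have hdual : ∀ J', IsIdeal le J' →
      ∑ v with v ∈ dualCode C₁, #{K | K ≈ₒ J' ∧ K ⊆ dualIdeal le v}
        = ∑ v with v ∈ dualCode C₂, #{K | K ≈ₒ J' ∧ K ⊆ dualIdeal le v} := by
    intro J' hJ'
    refine Nat.eq_of_mul_eq_mul_right (card_pos.mpr ⟨0, by simp⟩ : 0 < #{v | v ∈ C₁}) ?_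
    rw [sum_card_subset_dualIdeal_mul hG C₁ hJ', hcard, sum_card_subset_dualIdeal_mul hG C₂ hJ']
    congr 1
    exact sum_comp_eq_of_forall_card_filter_rel_eq (orbitRel G _)
      (fun L L' hL => card_filter_orbitRel_congr (R := fun K L => L ⊆ K)
        (fun g x y => smul_finset_subset_smul_finset_iff) J' hL) _ fun I _ => hdist I
  simpa only [AED_eq_card, filter_filter] using
    card_filter_orbitRel_eq_of_forall_sum_eq hG isIdeal_dualIdeal hdual J

end MacWilliams

lemma exists_mem_image_eq_iff_orbitRel {α : Type*} [DecidableEq α] (H : Subgroup (Equiv.Perm α))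
    (A B : Finset α) : (∃ σ ∈ H, A.image σ = B) ↔ orbitRel H (Finset α) A B := by
  rw [(orbitRel H (Finset α)).comm', orbitRel_apply, mem_orbit_iff]
  simp [Finset.smul_finset_def, Subgroup.smul_def, Equiv.Perm.smul_def]

theorem stmt_13_general {n : ℕ} (le : Fin n → Fin n → Prop)
    [IsPartialOrder (Fin n) le]
    (F : Type) [Field F] [Fintype F]
    (H : Subgroup (Equiv.Perm (Fin n))) (hH : ∀ σ ∈ H, IsAut le σ) :
    IsMacWilliamsType F le (fun A B => ∃ σ ∈ H, A.image σ = B) := by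
  have hE : (fun A B => ∃ σ ∈ H, A.image σ = B) = ⇑(orbitRel H (Finset (Fin n))) := by
    ext A B
    exact exists_mem_image_eq_iff_orbitRel H A B
  rw [hE]
  exact isMacWilliamsType_orbitRel fun σ => hH σ σ.2

/-- Theorem 4.1(i): for every subgroup `H` of `Aut(P)`, the relation `E_H` is of
MacWilliams type. -/
theorem stmt_13 {n : ℕ} (hn : 0 < n) (le : Fin n → Fin n → Prop)
    [IsPartialOrder (Fin n) le]
    (F : Type) [Field F] [Fintype F]
    (H : Subgroup (Equiv.Perm (Fin n))) (hH : ∀ σ ∈ H, IsAut le σ) :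
    IsMacWilliamsType F le (fun A B => ∃ σ ∈ H, A.image σ = B) :=
  stmt_13_general le F H hH

end
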